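/- Let R be an associative unital ring and M a chain complex of R-modules. Under each of the following conditions, every exact sequence of R-complexes 0 → L → M → N → 0 that is degreewise pure is degreewise split: (a) R is left noetherian and M is a complex of injective R-modules; (b) R is left perfect and M is a complex of projective R-modules; (c) R is semi-perfect and M is a complex of finitely generated projective R-modules; (d) R is left noetherian and M is a complex of finitely generated projective R-modules. -/

import Mathlib

/- Common definitions: chain complexes of modules, purity, pure-acyclicity,
   pure quasi-isomorphisms, flavors of minimality, semi-flat, semi-projective and
   semi-injective complexes, and ring-theoretic conditions, following the paper. -/

open CategoryTheory CategoryTheory.Limits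

universe u

namespace PaperPM

variable (R : Type u) [Ring R]

/-- Chain complexes of left `R`-modules, indexed by `ℤ`. -/
abbrev Cx := ChainComplex (ModuleCat.{u} R) ℤ

section ModuleLevel

variable {L M N : Type u} [AddCommGroup L] [AddCommGroup M] [AddCommGroup N]
  [Module R L] [Module R M] [Module R N]

/-- `0 → L → M → N → 0` is a short exact sequence of modules. -/
def ModSES (f : L →ₗ[R] M) (g : M →ₗ[R] N) : Prop :=
  Function.Injective f ∧ Function.Surjective g ∧ Function.Exact f g

/-- The sequence `0 → Hom(A,L) → Hom(A,M) → Hom(A,N) → 0` is exact for every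
finitely presented module `A`; together with `ModSES` this is purity. -/
def HomExact (f : L →ₗ[R] M) (g : M →ₗ[R] N) : Prop :=
  ∀ (A : Type u) [AddCommGroup A] [Module R A], Module.FinitePresentation R A →
    Function.Injective (fun h : A →ₗ[R] L => f ∘ₗ h) ∧
    Function.Exact (fun h : A →ₗ[R] L => f ∘ₗ h) (fun h : A →ₗ[R] M => g ∘ₗ h) ∧
    Function.Surjective (fun h : A →ₗ[R] M => g ∘ₗ h)

/-- A pure short exact sequence of modules. -/
def PureSES (f : L →ₗ[R] M) (g : M →ₗ[R] N) : Prop :=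
  ModSES R f g ∧ HomExact R f g

end ModuleLevel

/-- A module `F` is flat iff every short exact sequence `0 → L → M → F → 0` is pure. -/
def FlatModule (F : Type u) [AddCommGroup F] [Module R F] : Prop :=
  ∀ (L M : Type u) [AddCommGroup L] [AddCommGroup M] [Module R L] [Module R M]
    (f : L →ₗ[R] M) (g : M →ₗ[R] F), ModSES R f g → HomExact R f g

/-- A module `P` is pure-projective if `Hom(P,−)` leaves every pure exact sequence exact. -/
def PureProjectiveModule (P : Type u) [AddCommGroup P] [Module R P] : Prop :=
  ∀ (L M N : Type u) [AddCommGroup L] [AddCommGroup M] [AddCommGroup N]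
    [Module R L] [Module R M] [Module R N] (f : L →ₗ[R] M) (g : M →ₗ[R] N),
    PureSES R f g →
      Function.Injective (fun h : P →ₗ[R] L => f ∘ₗ h) ∧
      Function.Exact (fun h : P →ₗ[R] L => f ∘ₗ h) (fun h : P →ₗ[R] M => g ∘ₗ h) ∧
      Function.Surjective (fun h : P →ₗ[R] M => g ∘ₗ h)

/-- A module `E` is pure-injective if `Hom(−,E)` leaves every pure exact sequence exact. -/
def PureInjectiveModule (E : Type u) [AddCommGroup E] [Module R E] : Prop :=
  ∀ (L M N : Type u) [AddCommGroup L] [AddCommGroup M] [AddCommGroup N]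
    [Module R L] [Module R M] [Module R N] (f : L →ₗ[R] M) (g : M →ₗ[R] N),
    PureSES R f g →
      Function.Injective (fun h : N →ₗ[R] E => h ∘ₗ g) ∧
      Function.Exact (fun h : N →ₗ[R] E => h ∘ₗ g) (fun h : M →ₗ[R] E => h ∘ₗ f) ∧
      Function.Surjective (fun h : M →ₗ[R] E => h ∘ₗ f)

/-- `R` is von Neumann regular: every (left) `R`-module is flat. -/
def VonNeumannRegular : Prop :=
  ∀ (M : Type u) [AddCommGroup M] [Module R M], FlatModule R M

/-- `R` is left perfect: every flat left `R`-module is projective. -/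
def LeftPerfect : Prop :=
  ∀ (M : Type u) [AddCommGroup M] [Module R M], FlatModule R M → Module.Projective R M

/-- `R` is semi-perfect: every finitely generated flat left `R`-module is projective. -/
def SemiPerfect : Prop :=
  ∀ (M : Type u) [AddCommGroup M] [Module R M],
    Module.Finite R M → FlatModule R M → Module.Projective R M

/-- A complex is acyclic if its homology vanishes, i.e. it is exact at every degree. -/
def Acyclic (M : Cx R) : Prop :=
  ∀ i : ℤ, Function.Exact (M.d (i + 1) i) (M.d i (i - 1))

/-- The cycle submodule `Z_i(M)`. -/
noncomputable def cyc (M : Cx R) (i : ℤ) : Submodule R (M.X i) :=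
  LinearMap.ker (M.d i (i - 1)).hom

lemma d_mem_cyc (M : Cx R) (i : ℤ) (x : M.X i) :
    M.d i (i - 1) x ∈ cyc R M (i - 1) := by
  show (M.d (i - 1) (i - 1 - 1)).hom ((M.d i (i - 1)).hom x) = 0
  have h := congrArg (fun f => ModuleCat.Hom.hom f x) (M.d_comp_d i (i - 1) (i - 1 - 1))
  exact h

/-- The map `M_i → Z_{i-1}(M)` induced by the differential. -/
noncomputable def cycMap (M : Cx R) (i : ℤ) : M.X i →ₗ[R] cyc R M (i - 1) :=
  LinearMap.codRestrict (cyc R M (i - 1)) (M.d i (i - 1)).hom (d_mem_cyc R M i)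

/-- A complex is pure-acyclic if it is acyclic and each sequence
`0 → Z_i(M) → M_i → Z_{i-1}(M) → 0` is pure. -/
def PureAcyclic (M : Cx R) : Prop :=
  ∀ i : ℤ, PureSES R (cyc R M i).subtype (cycMap R M i)

/-- A morphism of complexes is null-homotopic. -/
def NullHomotopic {M N : Cx R} (f : M ⟶ N) : Prop :=
  Nonempty (Homotopy f 0)

/-- A complex is contractible if its identity is null-homotopic. -/
def Contractible (M : Cx R) : Prop :=
  Nonempty (Homotopy (𝟙 M) 0)

/-- A morphism of complexes is a homotopy equivalence: it has an inverse up to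
chain homotopy. -/
def IsHomotopyEquiv {M N : Cx R} (α : M ⟶ N) : Prop :=
  ∃ β : N ⟶ M, Nonempty (Homotopy (α ≫ β) (𝟙 M)) ∧ Nonempty (Homotopy (β ≫ α) (𝟙 N))

/-- A complex is minimal if every homotopy equivalence `M → M` is an isomorphism. -/
def Minimal (M : Cx R) : Prop :=
  ∀ α : M ⟶ M, IsHomotopyEquiv R α → IsIso α

/-- A morphism `α` of complexes is a pure quasi-isomorphism iff its mapping cone is
pure-acyclic, equivalently iff `Hom(A, α)` is a quasi-isomorphism for every finitely
presented module `A`. -/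
def PureQuasiIso {M N : Cx R} (α : M ⟶ N) : Prop :=
  ∀ (A : ModuleCat.{u} R), Module.FinitePresentation R A →
    QuasiIso (((preadditiveCoyoneda.obj (Opposite.op A)).mapHomologicalComplex
      (ComplexShape.down ℤ)).map α)

/-- `0 → L → M → N → 0` is a short exact sequence of complexes. -/
def CxSES {L M N : Cx R} (α : L ⟶ M) (β : M ⟶ N) : Prop :=
  ∀ i : ℤ, Function.Injective (α.f i) ∧ Function.Surjective (β.f i) ∧
    Function.Exact (α.f i) (β.f i)

/-- A short exact sequence of complexes is degreewise pure. -/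
def DegreewisePure {L M N : Cx R} (α : L ⟶ M) (β : M ⟶ N) : Prop :=
  ∀ i : ℤ, HomExact R (α.f i).hom (β.f i).hom

/-- A short exact sequence of complexes is degreewise split. -/
def DegreewiseSplit {L M N : Cx R} (α : L ⟶ M) (β : M ⟶ N) : Prop :=
  ∀ i : ℤ, ∃ ρ : M.X i ⟶ L.X i, α.f i ≫ ρ = 𝟙 (L.X i)

/-- A bounded complex of finitely presented modules. -/
def BoundedFPCx (A : Cx R) : Prop :=
  (∀ i, Module.FinitePresentation R (A.X i)) ∧
  ∃ a b : ℤ, ∀ i, (i < a ∨ b < i) → Subsingleton (A.X i)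

/-- Purity in the category of complexes: the sequence of chain-map groups
`0 → Hom(A,L) → Hom(A,M) → Hom(A,N) → 0` is exact for every bounded complex `A`
of finitely presented modules. -/
def CxPure {L M N : Cx R} (α : L ⟶ M) (β : M ⟶ N) : Prop :=
  ∀ A : Cx R, BoundedFPCx R A →
    Function.Injective (fun h : A ⟶ L => h ≫ α) ∧
    Function.Exact (fun h : A ⟶ L => h ≫ α) (fun h : A ⟶ M => h ≫ β) ∧
    Function.Surjective (fun h : A ⟶ M => h ≫ β)

/-- A complex is pure-minimal if the zero complex is its only pure-acyclic pure
subcomplex. -/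
def PureMinimal (M : Cx R) : Prop :=
  ∀ (P Q : Cx R) (ι : P ⟶ M) (π : M ⟶ Q),
    CxSES R ι π → CxPure R ι π → PureAcyclic R P → IsZero P

/-- A complex is split-minimal if the zero complex is its only contractible split
subcomplex (direct summand). -/
def SplitMinimal (M : Cx R) : Prop :=
  ∀ (P : Cx R) (ι : P ⟶ M) (ρ : M ⟶ P), ι ≫ ρ = 𝟙 P → Contractible R P → IsZero P

/-- A complex is semi-projective if it consists of projective modules and `Hom(P,−)`
preserves acyclicity; the latter amounts to every chain map into an acyclic complex
being null-homotopic. -/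
def SemiProjective (P : Cx R) : Prop :=
  (∀ i, Module.Projective R (P.X i)) ∧
  ∀ N : Cx R, Acyclic R N → ∀ f : P ⟶ N, NullHomotopic R f

/-- A complex is semi-injective if it consists of injective modules and `Hom(−,I)`
preserves acyclicity; the latter amounts to every chain map from an acyclic complex
being null-homotopic. -/
def SemiInjective (I : Cx R) : Prop :=
  (∀ i, Module.Injective R (I.X i)) ∧
  ∀ N : Cx R, Acyclic R N → ∀ f : N ⟶ I, NullHomotopic R f

section Dual

/-- The scalar action making the character group `Hom_ℤ(W, ℚ/ℤ)` of a right
`R`-module `W` a left `R`-module. -/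
noncomputable instance charSMul (W : Type u) [AddCommGroup W] [Module Rᵐᵒᵖ W] :
    SMul R (CharacterModule W) :=
  ⟨fun r f => f.comp (DistribMulAction.toAddMonoidHom W (MulOpposite.op r))⟩

/-- The left `R`-module structure on the character group of a right `R`-module. -/
noncomputable instance charModule (W : Type u) [AddCommGroup W] [Module Rᵐᵒᵖ W] :
    Module R (CharacterModule W) where
  one_smul f := CharacterModule.ext _ fun w => by
    show f (MulOpposite.op (1 : R) • w) = f w
    rw [MulOpposite.op_one, one_smul]
  mul_smul r s f := CharacterModule.ext _ fun w => by
    show f (MulOpposite.op (r * s) • w) = f (MulOpposite.op s • MulOpposite.op r • w)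
    rw [MulOpposite.op_mul, mul_smul]
  smul_zero r := CharacterModule.ext _ fun w => rfl
  smul_add r f g := CharacterModule.ext _ fun w => rfl
  add_smul r s f := CharacterModule.ext _ fun w => by
    show f (MulOpposite.op (r + s) • w) = f (MulOpposite.op r • w) + f (MulOpposite.op s • w)
    rw [MulOpposite.op_add, add_smul, map_add]
  zero_smul f := CharacterModule.ext _ fun w => by
    show f (MulOpposite.op (0 : R) • w) = 0
    rw [MulOpposite.op_zero, zero_smul, map_zero]

/-- The character module of a right `R`-module, as a left `R`-module. -/
noncomputable def dualMod (W : ModuleCat.{u} Rᵐᵒᵖ) : ModuleCat.{u} R :=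
  ModuleCat.of R (CharacterModule W)

/-- The dual of a map of right `R`-modules. -/
noncomputable def dualMap {W W' : ModuleCat.{u} Rᵐᵒᵖ} (g : W ⟶ W') :
    dualMod R W' ⟶ dualMod R W :=
  ModuleCat.ofHom (show CharacterModule ↥W' →ₗ[R] CharacterModule ↥W from
  { toFun := fun (f : CharacterModule ↥W') => (f.comp g.hom.toAddMonoidHom : CharacterModule ↥W),
    map_add' := fun _ _ => rfl,
    map_smul' := fun r (f : CharacterModule ↥W') => CharacterModule.ext _ (fun w =>
      congrArg (fun x => f x) (g.hom.map_smul (MulOpposite.op r) w).symm) })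

lemma dualMap_comp {W W' W'' : ModuleCat.{u} Rᵐᵒᵖ} (g : W ⟶ W') (h : W' ⟶ W'') :
    dualMap R (g ≫ h) = dualMap R h ≫ dualMap R g :=
  ModuleCat.hom_ext (LinearMap.ext fun _ => rfl)

lemma dualMap_zero {W W' : ModuleCat.{u} Rᵐᵒᵖ} : dualMap R (0 : W ⟶ W') = 0 :=
  ModuleCat.hom_ext (LinearMap.ext (fun (f : CharacterModule ↥W') =>
    CharacterModule.ext _ (fun _ => map_zero f)))

/-- The character dual of a complex `N` of right `R`-modules, as a complex of left
`R`-modules: `(N⁺)_i = (N_{-i})⁺`. -/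
noncomputable def dualCx (N : ChainComplex (ModuleCat.{u} Rᵐᵒᵖ) ℤ) : Cx R :=
  ChainComplex.of (fun i => dualMod R (N.X (-i)))
    (fun i => dualMap R (N.d (-i) (-(i + 1))))
    (fun n => by rw [← dualMap_comp, N.d_comp_d, dualMap_zero])

/-- A complex is semi-flat if it consists of flat modules and `− ⊗ F` preserves
acyclicity; by character-module duality the latter amounts to every chain map into
the character dual of an acyclic complex of right `R`-modules being null-homotopic. -/
def SemiFlat (F : Cx R) : Prop :=
  (∀ i, FlatModule R (F.X i)) ∧
  ∀ N : ChainComplex (ModuleCat.{u} Rᵐᵒᵖ) ℤ, Acyclic Rᵐᵒᵖ N →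
    ∀ f : F ⟶ dualCx R N, NullHomotopic R f

end Dual

/-- Two complexes are isomorphic in the derived category iff they are linked by a
roof of quasi-isomorphisms. -/
def DerivedIso (M N : Cx R) : Prop :=
  ∃ (W : Cx R) (f : W ⟶ M) (g : W ⟶ N), QuasiIso f ∧ QuasiIso g

/-- The flat dimension of `M` is at most `n`: `M` is isomorphic in the derived
category to a complex of flat modules concentrated in degrees `≤ n`. -/
def FdLe (M : Cx R) (n : ℤ) : Prop :=
  ∃ F : Cx R, (∀ i, FlatModule R (F.X i)) ∧ (∀ i, n < i → Subsingleton (F.X i)) ∧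
    DerivedIso R M F

/-- The projective dimension of `M` is at most `n`: `M` is isomorphic in the derived
category to a complex of projective modules concentrated in degrees `≤ n`. -/
def PdLe (M : Cx R) (n : ℤ) : Prop :=
  ∃ P : Cx R, (∀ i, Module.Projective R (P.X i)) ∧ (∀ i, n < i → Subsingleton (P.X i)) ∧
    DerivedIso R M P

/-!
Fix a degree `i` and split `0 → Lᵢ → Mᵢ → Nᵢ → 0` one module at a time. Over a noetherian ring
every `R ⧸ I` is finitely presented, so in (a) Baer's criterion for `Lᵢ` follows from purity:
extend `I → Lᵢ → Mᵢ` to `ψ : R → Mᵢ`, lift the induced `R ⧸ I → Nᵢ` to `Mᵢ` and subtract it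
from `ψ`; the difference lands in `Lᵢ`. Hence `Lᵢ` is injective and a direct summand. In (b) and
(c) a pure quotient of a projective module is flat, so `Nᵢ` is projective (it is finitely
generated in (c)). In (d) `Nᵢ` itself is finitely presented and purity lifts its identity.
-/

section PureExact

variable {R}
variable {L M N : Type u} [AddCommGroup L] [AddCommGroup M] [AddCommGroup N]
  [Module R L] [Module R M] [Module R N] {f : L →ₗ[R] M} {g : M →ₗ[R] N}

lemma exists_comp_eq_of_exact (hf : Function.Injective f) (hfg : Function.Exact f g)
    {A : Type*} [AddCommGroup A] [Module R A] (h : A →ₗ[R] M) (hh : g ∘ₗ h = 0) :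
    ∃ k : A →ₗ[R] L, f ∘ₗ k = h := by
  have hmem (a : A) : h a ∈ LinearMap.range f := (hfg (h a)).mp (LinearMap.congr_fun hh a)
  refine ⟨(LinearEquiv.ofInjective f hf).symm.toLinearMap ∘ₗ h.codRestrict _ hmem, ?_⟩
  ext a
  simp

lemma homExact_of_surjective_comp (hf : Function.Injective f) (hfg : Function.Exact f g)
    (hsurj : ∀ (A : Type u) [AddCommGroup A] [Module R A], Module.FinitePresentation R A →
      Function.Surjective (fun h : A →ₗ[R] M => g ∘ₗ h)) :
    HomExact R f g := by
  intro A _ _ hA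
  refine ⟨fun h₁ h₂ h => LinearMap.ext fun a => hf (LinearMap.congr_fun h a),
    fun h => ⟨fun hh => exists_comp_eq_of_exact hf hfg h hh, ?_⟩, hsurj A hA⟩
  rintro ⟨k, rfl⟩
  show g ∘ₗ f ∘ₗ k = 0
  rw [← LinearMap.comp_assoc, hfg.linearMap_comp_eq_zero, LinearMap.zero_comp]

lemma flatModule_of_homExact [Module.Projective R M] (hp : HomExact R f g) : FlatModule R N := by
  intro L' M' _ _ _ _ f' g' ⟨hf', hg', hfg'⟩
  refine homExact_of_surjective_comp hf' hfg' fun A _ _ hA h => ?_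
  obtain ⟨k, hk⟩ := (hp A hA).2.2 h
  obtain ⟨γ, hγ⟩ := Module.projective_lifting_property g' g hg'
  exact ⟨γ ∘ₗ k, show g' ∘ₗ γ ∘ₗ k = h by rw [← LinearMap.comp_assoc, hγ]; exact hk⟩

lemma injective_of_homExact [IsNoetherianRing R] [Module.Injective R M]
    (hf : Function.Injective f) (hfg : Function.Exact f g) (hp : HomExact R f g) :
    Module.Injective R L := by
  refine Module.Baer.injective fun I φ => ?_
  obtain ⟨ψ, hψ⟩ := Module.Injective.extension_property R M I R I.subtype
    Subtype.val_injective (f ∘ₗ φ)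
  have hI : I ≤ LinearMap.ker (g ∘ₗ ψ) := fun x hx => by
    simpa [hfg.apply_apply_eq_zero] using congrArg g (LinearMap.congr_fun hψ ⟨x, hx⟩)
  have : Module.FinitePresentation R (R ⧸ I) := Module.finitePresentation_of_finite R _
  obtain ⟨k, hk : g ∘ₗ k = I.liftQ (g ∘ₗ ψ) hI⟩ := (hp (R ⧸ I) this).2.2 _
  obtain ⟨χ, hχ⟩ := exists_comp_eq_of_exact hf hfg (ψ - k ∘ₗ I.mkQ) <| by
    rw [LinearMap.comp_sub, ← LinearMap.comp_assoc, hk, Submodule.liftQ_mkQ, sub_self]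
  refine ⟨χ, fun x hx => hf ?_⟩
  have hkx : k (I.mkQ x) = 0 := by
    rw [Submodule.mkQ_apply, (Submodule.Quotient.mk_eq_zero I).mpr hx, map_zero]
  calc f (χ x) = ψ x - k (I.mkQ x) := LinearMap.congr_fun hχ x
    _ = f (φ ⟨x, hx⟩) := by rw [hkx, sub_zero]; exact LinearMap.congr_fun hψ ⟨x, hx⟩

end PureExact

/-- Lemma 1.4: under each of the conditions (a)-(d), every degreewise
pure short exact sequence `0 → L → M → N → 0` of complexes is degreewise split. -/
theorem statement0 (M : Cx R)
    (hcond : (IsNoetherianRing R ∧ ∀ i, Module.Injective R (M.X i)) ∨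
      (LeftPerfect R ∧ ∀ i, Module.Projective R (M.X i)) ∨
      (SemiPerfect R ∧ ∀ i, Module.Projective R (M.X i) ∧ Module.Finite R (M.X i)) ∨
      (IsNoetherianRing R ∧ ∀ i, Module.Projective R (M.X i) ∧ Module.Finite R (M.X i))) :
    ∀ (L N : Cx R) (α : L ⟶ M) (β : M ⟶ N),
      CxSES R α β → DegreewisePure R α β → DegreewiseSplit R α β := by
  intro L N α β hses hpure i
  obtain ⟨hinj, hsurj, hexact⟩ := hses i
  suffices ∃ ρ : M.X i →ₗ[R] L.X i, ρ ∘ₗ (α.f i).hom = LinearMap.id by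
    obtain ⟨ρ, hρ⟩ := this
    exact ⟨ModuleCat.ofHom ρ, ModuleCat.hom_ext hρ⟩
  have retraction_of_section := ((hexact.split_tfae hinj hsurj).out 0 1).mp
  rcases hcond with ⟨_, hM⟩ | ⟨hR, hM⟩ | ⟨hR, hM⟩ | ⟨_, hM⟩
  · have := hM i
    have := injective_of_homExact hinj hexact (hpure i)
    exact Module.Injective.extension_property R _ _ _ _ hinj LinearMap.id
  · have := hM i
    have := hR _ (flatModule_of_homExact (hpure i))
    exact retraction_of_section (Module.projective_lifting_property _ _ hsurj)
  · have := (hM i).1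
    have := (hM i).2
    have := hR _ (.of_surjective _ hsurj) (flatModule_of_homExact (hpure i))
    exact retraction_of_section (Module.projective_lifting_property _ _ hsurj)
  · have := (hM i).2
    have : Module.Finite R (N.X i) := .of_surjective _ hsurj
    exact retraction_of_section ((hpure i _ (Module.finitePresentation_of_finite R _)).2.2 .id)

end PaperPM
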